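/- There exists a constant C > 0 such that for all natural numbers n ≥ 1 and all integers j ≥ 0 and k with 0 ≤ k ≤ n − j, the number of ordered pairs (z, z') of centers of squares of K_n satisfying 4^{-k-j-1} ≤ |u(z) − u(z')| ≤ 4^{-k-j+1} and 4^{-j-1}·|v(z) − v(z')| ≤ |u(z) − u(z')| ≤ 4^{-j+1}·|v(z) − v(z')| is at most C · 4^{2n − k − 2j}. -/
import Mathlib


open MeasureTheory Real Set

noncomputable section

/-- Digit value: `false ↦ 0`, `true ↦ 3`. -/
def dig (b : Bool) : ℝ := if b then 3 else 0

/-- Left endpoint `x_a = ∑ a_j 4^{-j}` of the interval coded by the word `a ∈ {0,3}^n`. -/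
def cantorX {n : ℕ} (a : Fin n → Bool) : ℝ :=
  ∑ j : Fin n, dig (a j) * (4 : ℝ) ^ (-((j : ℕ) + 1) : ℤ)

/-- The `n`-th generation `C_n` of the middle-half Cantor set. -/
def cantorC (n : ℕ) : Set ℝ :=
  ⋃ a : Fin n → Bool, Icc (cantorX a) (cantorX a + (4 : ℝ) ^ (-(n : ℤ)))

/-- The `n`-th generation `K_n = C_n × C_n` of the four-corner Cantor set. -/
def cantorK (n : ℕ) : Set (ℝ × ℝ) := cantorC n ×ˢ cantorC n

/-- The square `Q_{a,b}` of side `4^{-n}` of the `n`-th generation. -/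
def cantorSq {n : ℕ} (a b : Fin n → Bool) : Set (ℝ × ℝ) :=
  Icc (cantorX a) (cantorX a + (4 : ℝ) ^ (-(n : ℤ))) ×ˢ
    Icc (cantorX b) (cantorX b + (4 : ℝ) ^ (-(n : ℤ)))

/-- Orthogonal projection in direction `θ`: `proj_θ (x, y) = x cos θ + y sin θ`. -/
def projAngle (θ : ℝ) (p : ℝ × ℝ) : ℝ := p.1 * Real.cos θ + p.2 * Real.sin θ

/-- The Favard length of a planar set. -/
def favard (E : Set (ℝ × ℝ)) : ℝ :=
  (1 / π) * ∫ θ in (0 : ℝ)..π, (volume (projAngle θ '' E)).toReal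

end

noncomputable section

/-- The center of the square `Q_{a,b}`. -/
def sqCenter {n : ℕ} (a b : Fin n → Bool) : ℝ × ℝ :=
  (cantorX a + (4 : ℝ) ^ (-(n : ℤ)) / 2, cantorX b + (4 : ℝ) ^ (-(n : ℤ)) / 2)

/-- Coordinate of `z` along the axis rotated by `α = arctan(1/2)`. -/
def uCoord (z : ℝ × ℝ) : ℝ := (2 * z.1 + z.2) / Real.sqrt 5

/-- Coordinate of `z` along the axis orthogonal to the one rotated by `α = arctan(1/2)`. -/
def vCoord (z : ℝ × ℝ) : ℝ := (-z.1 + 2 * z.2) / Real.sqrt 5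

end

namespace FavAux
open Finset

def bitn (t : Bool) : ℕ := if t then 1 else 0

def hIntD (d : ℕ) : ℤ := 2 * (d % 2 : ℕ) - (d / 2 : ℕ)

def bext {n : ℕ} (a : Fin n → Bool) (i : ℕ) : ℕ := if h : i < n then bitn (a ⟨i, h⟩) else 0

def gd {n : ℕ} (a b : Fin n → Bool) (p : ℕ) : ℕ := 2 * bext a (n - 1 - p) + bext b (n - 1 - p)

def mm {n : ℕ} (a b : Fin n → Bool) : ℕ := ∑ p ∈ Finset.range n, gd a b p * 4 ^ p

def ll {n : ℕ} (a b : Fin n → Bool) : ℤ := ∑ p ∈ Finset.range n, hIntD (gd a b p) * 4 ^ p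

def Anat {n : ℕ} (a : Fin n → Bool) : ℕ := ∑ p ∈ Finset.range n, bext a (n - 1 - p) * 4 ^ p

lemma bitn_le (t : Bool) : bitn t ≤ 1 := by cases t <;> simp [bitn]

lemma bext_le {n : ℕ} (a : Fin n → Bool) (i : ℕ) : bext a i ≤ 1 := by
  unfold bext; split <;> simp [bitn_le]

lemma gd_le {n : ℕ} (a b : Fin n → Bool) (p : ℕ) : gd a b p ≤ 3 := by
  have h1 := bext_le a (n - 1 - p); have h2 := bext_le b (n - 1 - p)
  unfold gd; omega

lemma hIntD_abs : ∀ x < 4, ∀ y < 4, |hIntD x - hIntD y| ≤ 3 := by decide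

lemma sum_lt (g : ℕ → ℕ) (hg : ∀ p, g p ≤ 3) (N : ℕ) :
    (∑ p ∈ Finset.range N, g p * 4 ^ p) < 4 ^ N := by
  induction N with
  | zero => simp
  | succ N ih =>
    rw [Finset.sum_range_succ]
    have h1 : g N * 4 ^ N ≤ 3 * 4 ^ N := Nat.mul_le_mul_right _ (hg N)
    have h2 : (4:ℕ) ^ (N+1) = 4 * 4 ^ N := by ring
    omega

lemma digit_eq : ∀ (N : ℕ) (g g' : ℕ → ℕ), (∀ p, g p ≤ 3) → (∀ p, g' p ≤ 3) →
    (∑ p ∈ Finset.range N, g p * 4 ^ p) = (∑ p ∈ Finset.range N, g' p * 4 ^ p) →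
    ∀ p < N, g p = g' p := by
  intro N
  induction N with
  | zero => intro g g' _ _ _ p hp; omega
  | succ N ih =>
    intro g g' hg hg' h p hp
    rw [Finset.sum_range_succ' (fun p => g p * 4 ^ p),
        Finset.sum_range_succ' (fun p => g' p * 4 ^ p)] at h
    have e1 : ∀ (g : ℕ → ℕ), (∑ i ∈ Finset.range N, g (i+1) * 4 ^ (i+1))
        = 4 * ∑ i ∈ Finset.range N, g (i+1) * 4 ^ i := by
      intro g; rw [Finset.mul_sum]; apply Finset.sum_congr rfl; intro i _; ring
    rw [e1 g, e1 g'] at h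
    simp only [pow_zero, mul_one] at h
    have hg0 := hg 0; have hg0' := hg' 0
    have h0 : g 0 = g' 0 := by omega
    have hs : (∑ i ∈ Finset.range N, g (i+1) * 4 ^ i)
        = ∑ i ∈ Finset.range N, g' (i+1) * 4 ^ i := by omega
    rcases p with _ | t
    · exact h0
    · exact ih (fun i => g (i+1)) (fun i => g' (i+1)) (fun p => hg _) (fun p => hg' _) hs t
        (by omega)

lemma key (N q : ℕ) (g g' : ℕ → ℕ) (hg : ∀ p, g p ≤ 3) (hg' : ∀ p, g' p ≤ 3)
    (hlt : (∑ p ∈ Finset.range N, g' p * 4 ^ p) < ∑ p ∈ Finset.range N, g p * 4 ^ p)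
    (hV : (4:ℤ) ^ q ≤ |(∑ p ∈ Finset.range N, hIntD (g p) * 4 ^ p) -
        ∑ p ∈ Finset.range N, hIntD (g' p) * 4 ^ p|) :
    (∑ p ∈ Finset.range N, g p * 4 ^ p) % 4 ^ q <
      (∑ p ∈ Finset.range N, g p * 4 ^ p) - ∑ p ∈ Finset.range N, g' p * 4 ^ p := by
  have hDne : ((Finset.range N).filter (fun p => g p ≠ g' p)).Nonempty := by
    rw [Finset.filter_nonempty_iff]
    by_contra hcon; push_neg at hcon
    have : (∑ p ∈ Finset.range N, g p * 4 ^ p) = ∑ p ∈ Finset.range N, g' p * 4 ^ p :=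
      Finset.sum_congr rfl (fun p hp => by rw [hcon p hp])
    omega
  obtain ⟨p₀, hp₀mem, hmaxall⟩ :
      ∃ p₀ ∈ (Finset.range N).filter (fun p => g p ≠ g' p),
        ∀ p ∈ (Finset.range N).filter (fun p => g p ≠ g' p), p ≤ p₀ :=
    ⟨_, Finset.max'_mem _ hDne, fun p hp => Finset.le_max' _ p hp⟩
  rw [Finset.mem_filter, Finset.mem_range] at hp₀mem
  obtain ⟨hp₀N, hp₀ne⟩ := hp₀mem
  have hmax : ∀ p, p < N → g p ≠ g' p → p ≤ p₀ := fun p hp hne =>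
    hmaxall p (Finset.mem_filter.mpr ⟨Finset.mem_range.mpr hp, hne⟩)
  by_cases hq : q ≤ p₀
  · -- main case
    have hsplit : ∀ (g : ℕ → ℕ), (∑ p ∈ Finset.range N, g p * 4 ^ p) =
        (∑ p ∈ Finset.range p₀, g p * 4 ^ p) + g p₀ * 4 ^ p₀ +
          4 ^ (p₀+1) * ∑ t ∈ Finset.range (N - (p₀+1)), g (p₀+1+t) * 4 ^ t := by
      intro g
      calc (∑ p ∈ Finset.range N, g p * 4 ^ p)
          = ∑ p ∈ Finset.range ((p₀+1) + (N - (p₀+1))), g p * 4 ^ p := by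
            rw [show (p₀+1) + (N - (p₀+1)) = N from by omega]
        _ = (∑ p ∈ Finset.range (p₀+1), g p * 4 ^ p) +
            ∑ t ∈ Finset.range (N - (p₀+1)), g ((p₀+1)+t) * 4 ^ ((p₀+1)+t) :=
            Finset.sum_range_add _ _ _
        _ = (∑ p ∈ Finset.range p₀, g p * 4 ^ p) + g p₀ * 4 ^ p₀ +
            4 ^ (p₀+1) * ∑ t ∈ Finset.range (N - (p₀+1)), g (p₀+1+t) * 4 ^ t := by
            rw [Finset.sum_range_succ, Finset.mul_sum]
            congr 1
            apply Finset.sum_congr rfl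
            intro t _; rw [pow_add]; ring
    have hHeq : (∑ t ∈ Finset.range (N - (p₀+1)), g (p₀+1+t) * 4 ^ t)
        = ∑ t ∈ Finset.range (N - (p₀+1)), g' (p₀+1+t) * 4 ^ t := by
      apply Finset.sum_congr rfl
      intro t ht
      rw [Finset.mem_range] at ht
      have : g (p₀+1+t) = g' (p₀+1+t) := by
        by_contra hne
        have := hmax (p₀+1+t) (by omega) hne
        omega
      rw [this]
    have hLlt : (∑ p ∈ Finset.range p₀, g p * 4 ^ p) < 4 ^ p₀ := sum_lt g hg p₀
    have hL'lt : (∑ p ∈ Finset.range p₀, g' p * 4 ^ p) < 4 ^ p₀ := sum_lt g' hg' p₀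
    have hmod : (∑ p ∈ Finset.range N, g p * 4 ^ p) % 4 ^ p₀
        = ∑ p ∈ Finset.range p₀, g p * 4 ^ p := by
      rw [hsplit g]
      have : (∑ p ∈ Finset.range p₀, g p * 4 ^ p) + g p₀ * 4 ^ p₀ + 4 ^ (p₀+1) *
          (∑ t ∈ Finset.range (N - (p₀+1)), g (p₀+1+t) * 4 ^ t)
          = (∑ p ∈ Finset.range p₀, g p * 4 ^ p) +
            4 ^ p₀ * (g p₀ + 4 * ∑ t ∈ Finset.range (N - (p₀+1)), g (p₀+1+t) * 4 ^ t) := by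
        ring
      rw [this, Nat.add_mul_mod_self_left, Nat.mod_eq_of_lt hLlt]
    have hm := hsplit g
    have hm' := hsplit g'
    rw [← hHeq] at hm'
    have hZlt : (∑ p ∈ Finset.range p₀, g p * 4 ^ p) <
        (∑ p ∈ Finset.range N, g p * 4 ^ p) - (∑ p ∈ Finset.range N, g' p * 4 ^ p) := by
      rcases Nat.lt_or_ge (g p₀) (g' p₀) with hcase | hcase
      · exfalso
        have h1 : g p₀ * 4 ^ p₀ + 4 ^ p₀ ≤ g' p₀ * 4 ^ p₀ := by
          have : (g p₀ + 1) * 4 ^ p₀ ≤ g' p₀ * 4 ^ p₀ :=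
            Nat.mul_le_mul_right _ (by omega)
          rw [add_mul, one_mul] at this; omega
        omega
      · have h1 : g' p₀ * 4 ^ p₀ + 4 ^ p₀ ≤ g p₀ * 4 ^ p₀ := by
          have hgt : g' p₀ < g p₀ := lt_of_le_of_ne hcase (Ne.symm hp₀ne)
          have : (g' p₀ + 1) * 4 ^ p₀ ≤ g p₀ * 4 ^ p₀ :=
            Nat.mul_le_mul_right _ (by omega)
          rw [add_mul, one_mul] at this; omega
        omega
    have hmq : (∑ p ∈ Finset.range N, g p * 4 ^ p) % 4 ^ q ≤
        ∑ p ∈ Finset.range p₀, g p * 4 ^ p := by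
      rw [← Nat.mod_mod_of_dvd _ (pow_dvd_pow 4 hq), hmod]
      exact Nat.mod_le _ _
    omega
  · -- contradiction case : all differing digits below q
    exfalso
    push_neg at hq
    have habs : |(∑ p ∈ Finset.range N, hIntD (g p) * 4 ^ p) -
        ∑ p ∈ Finset.range N, hIntD (g' p) * 4 ^ p| ≤ 4 ^ q - 1 := by
      rw [← Finset.sum_sub_distrib]
      calc |∑ p ∈ Finset.range N, (hIntD (g p) * 4 ^ p - hIntD (g' p) * 4 ^ p)|
          ≤ ∑ p ∈ Finset.range N, |hIntD (g p) * 4 ^ p - hIntD (g' p) * 4 ^ p| :=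
            Finset.abs_sum_le_sum_abs _ _
        _ ≤ ∑ p ∈ Finset.range N, (if p < q then 3 * 4 ^ p else 0) := by
            apply Finset.sum_le_sum
            intro p hp
            rw [Finset.mem_range] at hp
            by_cases hne : g p = g' p
            · rw [hne]; simp; split <;> positivity
            · have hpq : p < q := by have := hmax p hp hne; omega
              rw [if_pos hpq, ← sub_mul, abs_mul]
              have h4 : |(4:ℤ) ^ p| = 4 ^ p := abs_of_nonneg (by positivity)
              rw [h4]
              exact mul_le_mul_of_nonneg_right
                (hIntD_abs (g p) (by have := hg p; omega) (g' p) (by have := hg' p; omega))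
                (by positivity)
        _ ≤ ∑ p ∈ Finset.range q, 3 * 4 ^ p := by
            rw [← Finset.sum_filter]
            apply Finset.sum_le_sum_of_subset_of_nonneg
            · intro x hx; rw [Finset.mem_filter] at hx; exact Finset.mem_range.mpr hx.2
            · intros; positivity
        _ = 4 ^ q - 1 := by
            have := geom_sum_mul (4:ℤ) q
            have h3 : (∑ p ∈ Finset.range q, 3 * 4 ^ p) = (∑ i ∈ Finset.range q, (4:ℤ) ^ i) * 3 := by
              rw [Finset.sum_mul]; apply Finset.sum_congr rfl; intro i _; ring
            rw [h3]
            linarith [geom_sum_mul (4:ℤ) q]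
    have hpos : (0:ℤ) < 4 ^ q := by positivity
    linarith


lemma mm_lt {n : ℕ} (a b : Fin n → Bool) : mm a b < 4 ^ n :=
  sum_lt (gd a b) (gd_le a b) n

lemma key' {n : ℕ} (q : ℕ) (a b a' b' : Fin n → Bool) (hlt : mm a' b' < mm a b)
    (hV : (4:ℤ) ^ q ≤ |ll a b - ll a' b'|) : mm a b % 4 ^ q < mm a b - mm a' b' :=
  key n q (gd a b) (gd a' b') (gd_le a b) (gd_le a' b') hlt hV

lemma mm_inj {n : ℕ} (a b a' b' : Fin n → Bool) (h : mm a b = mm a' b') :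
    a = a' ∧ b = b' := by
  have hd := digit_eq n (gd a b) (gd a' b') (gd_le a b) (gd_le a' b') h
  have hdig : ∀ i : Fin n, 2 * bitn (a i) + bitn (b i) = 2 * bitn (a' i) + bitn (b' i) := by
    intro i
    have hi : (i : ℕ) < n := i.isLt
    have hp : n - 1 - (n - 1 - (i : ℕ)) = (i : ℕ) := by omega
    have := hd (n - 1 - (i : ℕ)) (by omega)
    unfold gd at this
    rw [hp] at this
    unfold bext at this
    rw [dif_pos hi, dif_pos hi] at this
    simpa using this
  constructor
  · funext i
    have := hdig i
    cases ha : a i <;> cases ha' : a' i <;> cases hb : b i <;> cases hb' : b' i <;>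
      simp_all [bitn]
  · funext i
    have := hdig i
    cases ha : a i <;> cases ha' : a' i <;> cases hb : b i <;> cases hb' : b' i <;>
      simp_all [bitn]

lemma mm_eq {n : ℕ} (a b : Fin n → Bool) : mm a b = 2 * Anat a + Anat b := by
  unfold mm gd Anat
  rw [Finset.mul_sum, ← Finset.sum_add_distrib]
  apply Finset.sum_congr rfl
  intro p _; ring

lemma hIntD_eq : ∀ x ≤ 1, ∀ y ≤ 1, hIntD (2 * x + y) = 2 * (y : ℤ) - (x : ℤ) := by decide

lemma ll_eq {n : ℕ} (a b : Fin n → Bool) : ll a b = 2 * (Anat b : ℤ) - (Anat a : ℤ) := by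
  unfold ll
  have : ∀ p ∈ Finset.range n, hIntD (gd a b p) * (4:ℤ) ^ p =
      2 * ((bext b (n - 1 - p) : ℤ) * 4 ^ p) - (bext a (n - 1 - p) : ℤ) * 4 ^ p := by
    intro p _
    unfold gd
    rw [hIntD_eq _ (bext_le a _) _ (bext_le b _)]
    ring
  rw [Finset.sum_congr rfl this, Finset.sum_sub_distrib, ← Finset.mul_sum]
  unfold Anat
  push_cast
  ring

lemma pow4_split {n p : ℕ} (h : p < n) :
    (4:ℝ) ^ (n - 1 - p) = 4 ^ (n : ℤ) * 4 ^ (-(p : ℤ) - 1) := by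
  rw [← zpow_natCast (4:ℝ) (n - 1 - p), ← zpow_add₀ (by norm_num : (4:ℝ) ≠ 0)]
  congr 1
  omega

lemma cantorX_eq {n : ℕ} (a : Fin n → Bool) :
    cantorX a = 3 * (4:ℝ) ^ (-(n : ℤ)) * (Anat a : ℝ) := by
  have hA : (Anat a : ℝ) = ∑ p ∈ Finset.range n, (bext a p : ℝ) * 4 ^ (n - 1 - p) := by
    unfold Anat
    push_cast
    rw [← Finset.sum_range_reflect (fun p => (bext a p : ℝ) * 4 ^ (n - 1 - p)) n]
    apply Finset.sum_congr rfl
    intro p hp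
    have hpn : p < n := Finset.mem_range.mp hp
    have : n - 1 - (n - 1 - p) = p := by omega
    rw [this]
  rw [hA, Finset.mul_sum,
    ← Fin.sum_univ_eq_sum_range (fun p => 3 * (4:ℝ) ^ (-(n:ℤ)) * ((bext a p : ℝ) * 4 ^ (n - 1 - p))) n]
  unfold cantorX
  apply Finset.sum_congr rfl
  intro i _
  have hi : (i : ℕ) < n := i.isLt
  have hbe : (bext a (i : ℕ) : ℝ) = if a i then 1 else 0 := by
    unfold bext
    rw [dif_pos hi]
    cases h : a i <;> simp [bitn]
  have hdig : dig (a i) = 3 * (bext a (i:ℕ) : ℝ) := by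
    rw [hbe]; unfold dig; cases h : a i <;> norm_num
  rw [hdig, pow4_split hi]
  have hinv : (4:ℝ) ^ (-(n:ℤ)) * 4 ^ (n:ℤ) = 1 := by
    rw [← zpow_add₀ (by norm_num : (4:ℝ) ≠ 0)]
    simp
  have hexp : (-((i:ℕ) + 1) : ℤ) = -((i:ℕ):ℤ) - 1 := by push_cast; ring
  rw [hexp,
    show 3 * (4:ℝ) ^ (-(n:ℤ)) * ((bext a (i:ℕ) : ℝ) * (4 ^ (n:ℤ) * 4 ^ (-((i:ℕ):ℤ) - 1)))
      = (4 ^ (-(n:ℤ)) * 4 ^ (n:ℤ)) * ((bext a (i:ℕ) : ℝ) * (3 * 4 ^ (-((i:ℕ):ℤ) - 1)))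
      from by ring, hinv, one_mul]
  ring

lemma udiff {n : ℕ} (a b a' b' : Fin n → Bool) :
    uCoord (sqCenter a b) - uCoord (sqCenter a' b') =
      3 * (4:ℝ) ^ (-(n:ℤ)) / Real.sqrt 5 * ((mm a b : ℝ) - (mm a' b' : ℝ)) := by
  have h1 : ((mm a b : ℕ) : ℝ) = 2 * (Anat a : ℝ) + (Anat b : ℝ) := by
    rw [mm_eq]; push_cast; ring
  have h2 : ((mm a' b' : ℕ) : ℝ) = 2 * (Anat a' : ℝ) + (Anat b' : ℝ) := by
    rw [mm_eq]; push_cast; ring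
  simp only [uCoord, sqCenter]
  rw [cantorX_eq a, cantorX_eq b, cantorX_eq a', cantorX_eq b', h1, h2]
  ring

lemma vdiff {n : ℕ} (a b a' b' : Fin n → Bool) :
    vCoord (sqCenter a b) - vCoord (sqCenter a' b') =
      3 * (4:ℝ) ^ (-(n:ℤ)) / Real.sqrt 5 * (((ll a b : ℤ) : ℝ) - ((ll a' b' : ℤ) : ℝ)) := by
  have h1 : ((ll a b : ℤ) : ℝ) = 2 * (Anat b : ℝ) - (Anat a : ℝ) := by
    rw [ll_eq]; push_cast; ring
  have h2 : ((ll a' b' : ℤ) : ℝ) = 2 * (Anat b' : ℝ) - (Anat a' : ℝ) := by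
    rw [ll_eq]; push_cast; ring
  simp only [vCoord, sqCenter]
  rw [cantorX_eq a, cantorX_eq b, cantorX_eq a', cantorX_eq b', h1, h2]
  ring

lemma facts {n j k : ℕ} (hjk : j + k ≤ n) (a b a' b' : Fin n → Bool)
    (h1 : (4:ℝ) ^ (-(k:ℤ) - j - 1) ≤ |uCoord (sqCenter a b) - uCoord (sqCenter a' b')|)
    (h2 : |uCoord (sqCenter a b) - uCoord (sqCenter a' b')| ≤ (4:ℝ) ^ (-(k:ℤ) - j + 1))
    (h4 : |uCoord (sqCenter a b) - uCoord (sqCenter a' b')| ≤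
        (4:ℝ) ^ (-(j:ℤ) + 1) * |vCoord (sqCenter a b) - vCoord (sqCenter a' b')|) :
    mm a b ≠ mm a' b' ∧
    max (mm a b) (mm a' b') - min (mm a b) (mm a' b') ≤ 4 ^ (n - j - k + 1) ∧
    max (mm a b) (mm a' b') % 4 ^ (n - k - 4) <
      max (mm a b) (mm a' b') - min (mm a b) (mm a' b') := by
  have h4ne : (4:ℝ) ≠ 0 := by norm_num
  have hsq5 : 0 < Real.sqrt 5 := Real.sqrt_pos.mpr (by norm_num)
  have h5sq : Real.sqrt 5 ^ 2 = 5 := Real.sq_sqrt (by norm_num)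
  have h5l : 1 ≤ Real.sqrt 5 := by nlinarith
  have h5u : Real.sqrt 5 ≤ 3 := by nlinarith
  set X : ℝ := (mm a b : ℝ) - (mm a' b' : ℝ) with hXdef
  set V : ℝ := ((ll a b : ℤ) : ℝ) - ((ll a' b' : ℤ) : ℝ) with hVdef
  have hc : 0 < 3 * (4:ℝ) ^ (-(n:ℤ)) / Real.sqrt 5 := by positivity
  have hu : |uCoord (sqCenter a b) - uCoord (sqCenter a' b')|
      = 3 * (4:ℝ) ^ (-(n:ℤ)) / Real.sqrt 5 * |X| := by
    rw [udiff, abs_mul, abs_of_pos hc]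
  have hv : |vCoord (sqCenter a b) - vCoord (sqCenter a' b')|
      = 3 * (4:ℝ) ^ (-(n:ℤ)) / Real.sqrt 5 * |V| := by
    rw [vdiff, abs_mul, abs_of_pos hc]
  rw [hu] at h1 h2 h4
  rw [hv] at h4
  -- flip helpers
  have hflip : ∀ (e : ℤ) (Y : ℝ), (4:ℝ) ^ e ≤ (4:ℝ) ^ (-(n:ℤ)) * Y → (4:ℝ) ^ (e + n) ≤ Y := by
    intro e Y h
    have h4n : (0:ℝ) < (4:ℝ) ^ (n:ℤ) := by positivity
    have h' := mul_le_mul_of_nonneg_left h h4n.le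
    rw [show (4:ℝ) ^ (n:ℤ) * ((4:ℝ) ^ (-(n:ℤ)) * Y) = ((4:ℝ) ^ (n:ℤ) * 4 ^ (-(n:ℤ))) * Y
      from by ring, ← zpow_add₀ h4ne (n:ℤ) (-(n:ℤ)), ← zpow_add₀ h4ne (n:ℤ) e] at h'
    rw [show (e + (n:ℤ)) = (n:ℤ) + e from by ring]
    calc (4:ℝ) ^ ((n:ℤ) + e) ≤ 4 ^ ((n:ℤ) + -(n:ℤ)) * Y := h'
      _ = Y := by norm_num
  have hflip2 : ∀ (e : ℤ) (Y : ℝ), (4:ℝ) ^ (-(n:ℤ)) * Y ≤ (4:ℝ) ^ e → Y ≤ (4:ℝ) ^ (e + n) := by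
    intro e Y h
    have h4n : (0:ℝ) < (4:ℝ) ^ (n:ℤ) := by positivity
    have h' := mul_le_mul_of_nonneg_left h h4n.le
    rw [show (4:ℝ) ^ (n:ℤ) * ((4:ℝ) ^ (-(n:ℤ)) * Y) = ((4:ℝ) ^ (n:ℤ) * 4 ^ (-(n:ℤ))) * Y
      from by ring, ← zpow_add₀ h4ne (n:ℤ) (-(n:ℤ)), ← zpow_add₀ h4ne (n:ℤ) e] at h'
    rw [show (e + (n:ℤ)) = (n:ℤ) + e from by ring]
    calc Y = 4 ^ ((n:ℤ) + -(n:ℤ)) * Y := by norm_num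
      _ ≤ (4:ℝ) ^ ((n:ℤ) + e) := h'
  -- lower bound on |X|
  have hA1 : (4:ℝ) ^ (-(k:ℤ) - j - 1) ≤ (4:ℝ) ^ (-(n:ℤ)) * (3 * |X|) := by
    have hrw : 3 * (4:ℝ) ^ (-(n:ℤ)) / Real.sqrt 5 * |X|
        = ((4:ℝ) ^ (-(n:ℤ)) * (3 * |X|)) / Real.sqrt 5 := by ring
    rw [hrw] at h1
    exact h1.trans (div_le_self (by positivity) h5l)
  have hXlb := hflip _ _ hA1
  rw [show (-(k:ℤ) - j - 1 + n) = (n:ℤ) - k - j - 1 from by ring] at hXlb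
  -- upper bound on |X|
  have hA2 : (4:ℝ) ^ (-(n:ℤ)) * |X| ≤ (4:ℝ) ^ (-(k:ℤ) - j + 1) := by
    refine le_trans ?_ h2
    apply mul_le_mul_of_nonneg_right ?_ (abs_nonneg X)
    rw [le_div_iff₀ hsq5]
    have h4n : (0:ℝ) < (4:ℝ) ^ (-(n:ℤ)) := by positivity
    nlinarith
  have hXub := hflip2 _ _ hA2
  rw [show (-(k:ℤ) - j + 1 + n) = (n:ℤ) - k - j + 1 from by ring] at hXub
  -- |X| ≤ 4^{-j+1} |V|
  have e4 : |X| ≤ (4:ℝ) ^ (-(j:ℤ) + 1) * |V| := by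
    rw [show (4:ℝ) ^ (-(j:ℤ) + 1) * (3 * (4:ℝ) ^ (-(n:ℤ)) / Real.sqrt 5 * |V|)
      = 3 * (4:ℝ) ^ (-(n:ℤ)) / Real.sqrt 5 * ((4:ℝ) ^ (-(j:ℤ) + 1) * |V|) from by ring] at h4
    exact le_of_mul_le_mul_left h4 hc
  -- lower bound on |V|
  have hVlb : (4:ℝ) ^ ((n:ℤ) - k - 2) ≤ 3 * |V| := by
    have hstep : (4:ℝ) ^ ((n:ℤ) - k - j - 1) ≤ 3 * ((4:ℝ) ^ (-(j:ℤ) + 1) * |V|) := by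
      nlinarith [hXlb, e4]
    have hj4 : (0:ℝ) ≤ (4:ℝ) ^ ((j:ℤ) - 1) := by positivity
    have hmul := mul_le_mul_of_nonneg_left hstep hj4
    rw [← zpow_add₀ h4ne ((j:ℤ) - 1) ((n:ℤ) - k - j - 1),
      show ((j:ℤ) - 1 + ((n:ℤ) - k - j - 1)) = (n:ℤ) - k - 2 from by ring] at hmul
    have hj1 : (4:ℝ) ^ ((j:ℤ) - 1) * 4 ^ (-(j:ℤ) + 1) = 1 := by
      rw [← zpow_add₀ h4ne]; norm_num
    rw [show (4:ℝ) ^ ((j:ℤ) - 1) * (3 * ((4:ℝ) ^ (-(j:ℤ) + 1) * |V|))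
      = ((4:ℝ) ^ ((j:ℤ) - 1) * 4 ^ (-(j:ℤ) + 1)) * (3 * |V|) from by ring, hj1, one_mul] at hmul
    exact hmul
  -- conclusion 1 : mm a b ≠ mm a' b'
  have hXpos : 0 < |X| := by
    by_contra hcon
    push_neg at hcon
    have : (0:ℝ) < (4:ℝ) ^ ((n:ℤ) - k - j - 1) := by positivity
    nlinarith
  have hne : mm a b ≠ mm a' b' := by
    intro heq
    rw [hXdef, heq, sub_self, abs_zero] at hXpos
    exact lt_irrefl _ hXpos
  refine ⟨hne, ?_, ?_⟩
  · -- conclusion 2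
    have habs : ((max (mm a b) (mm a' b') - min (mm a b) (mm a' b') : ℕ) : ℝ) = |X| := by
      rcases le_total (mm a b) (mm a' b') with hle | hle
      · rw [max_eq_right hle, min_eq_left hle, Nat.cast_sub hle, hXdef,
          abs_of_nonpos (by simp [sub_nonpos]; exact_mod_cast hle), neg_sub]
      · rw [max_eq_left hle, min_eq_right hle, Nat.cast_sub hle, hXdef,
          abs_of_nonneg (by simp [sub_nonneg]; exact_mod_cast hle)]
    have hpow : ((4 ^ (n - j - k + 1) : ℕ) : ℝ) = (4:ℝ) ^ ((n:ℤ) - k - j + 1) := by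
      push_cast
      rw [← zpow_natCast (4:ℝ) (n - j - k + 1)]
      congr 1
      omega
    have := habs ▸ hXub
    rw [← hpow] at this
    exact_mod_cast this
  · -- conclusion 3
    rcases Nat.lt_or_ge n (k + 4) with hsmall | hbig
    · have hq0 : n - k - 4 = 0 := by omega
      rw [hq0, pow_zero, Nat.mod_one]
      have := min_lt_max.mpr hne
      omega
    · -- derive the integer bound on |ll - ll'|
      have hcast : ((4:ℝ) ^ ((n - k - 4 : ℕ))) = (4:ℝ) ^ ((n:ℤ) - k - 4) := by
        rw [← zpow_natCast]; congr 1; omega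
      have hVge : ((4:ℤ) ^ (n - k - 4) : ℤ) ≤ |ll a b - ll a' b'| := by
        have hsplit2 : (4:ℝ) ^ ((n:ℤ) - k - 2) = (4:ℝ) ^ ((n:ℤ) - k - 4) * 16 := by
          rw [show ((n:ℤ) - k - 2) = ((n:ℤ) - k - 4) + 2 from by ring, zpow_add₀ h4ne]
          norm_num
        have hq4 : (0:ℝ) < (4:ℝ) ^ ((n:ℤ) - k - 4) := by positivity
        have hVr : (4:ℝ) ^ ((n:ℤ) - k - 4) ≤ |V| := by nlinarith
        have hVcast : |V| = ((|ll a b - ll a' b'| : ℤ) : ℝ) := by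
          rw [hVdef, Int.cast_abs]
          push_cast
          ring_nf
        rw [hVcast, ← hcast] at hVr
        exact_mod_cast hVr
      rcases Nat.lt_or_ge (mm a' b') (mm a b) with hlt | hge
      · rw [max_eq_left hlt.le, min_eq_right hlt.le]
        exact key' (n - k - 4) a b a' b' hlt hVge
      · have hlt2 : mm a b < mm a' b' := lt_of_le_of_ne hge hne
        rw [max_eq_right hlt2.le, min_eq_left hlt2.le]
        exact key' (n - k - 4) a' b' a b hlt2 (by rw [abs_sub_comm] at hVge; exact hVge)

lemma count_main {n j k : ℕ} (hn : 1 ≤ n) (hjk : j + k ≤ n) :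
    Nat.card {p : ((Fin n → Bool) × (Fin n → Bool)) × ((Fin n → Bool) × (Fin n → Bool)) |
        (4 : ℝ) ^ (-(k : ℤ) - j - 1) ≤
            |uCoord (sqCenter p.1.1 p.1.2) - uCoord (sqCenter p.2.1 p.2.2)| ∧
          |uCoord (sqCenter p.1.1 p.1.2) - uCoord (sqCenter p.2.1 p.2.2)| ≤
            (4 : ℝ) ^ (-(k : ℤ) - j + 1) ∧
          (4 : ℝ) ^ (-(j : ℤ) - 1) *
              |vCoord (sqCenter p.1.1 p.1.2) - vCoord (sqCenter p.2.1 p.2.2)| ≤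
            |uCoord (sqCenter p.1.1 p.1.2) - uCoord (sqCenter p.2.1 p.2.2)| ∧
          |uCoord (sqCenter p.1.1 p.1.2) - uCoord (sqCenter p.2.1 p.2.2)| ≤
            (4 : ℝ) ^ (-(j : ℤ) + 1) *
              |vCoord (sqCenter p.1.1 p.1.2) - vCoord (sqCenter p.2.1 p.2.2)|} ≤
      2 * (4 ^ (n - (n - k - 4)) * (4 ^ (n - j - k + 1) * 4 ^ (n - j - k + 1))) := by
  classical
  have hB0 : 0 < 4 ^ (n - j - k + 1) := pow_pos (by norm_num) _
  have hU0 : 0 < 4 ^ (n - (n - k - 4)) := pow_pos (by norm_num) _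
  have hcard : Nat.card (Bool × Fin (4 ^ (n - (n - k - 4))) ×
      Fin (4 ^ (n - j - k + 1)) × Fin (4 ^ (n - j - k + 1)))
      = 2 * (4 ^ (n - (n - k - 4)) * (4 ^ (n - j - k + 1) * 4 ^ (n - j - k + 1))) := by
    simp [Nat.card_eq_fintype_card]
  rw [← hcard]
  apply Nat.card_le_card_of_injective
    (f := fun e => ((decide (mm e.1.2.1 e.1.2.2 < mm e.1.1.1 e.1.1.2)),
      (⟨max (mm e.1.1.1 e.1.1.2) (mm e.1.2.1 e.1.2.2) / 4 ^ (n - k - 4) % 4 ^ (n - (n - k - 4)),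
        Nat.mod_lt _ hU0⟩ : Fin (4 ^ (n - (n - k - 4)))),
      (⟨max (mm e.1.1.1 e.1.1.2) (mm e.1.2.1 e.1.2.2) % 4 ^ (n - k - 4) % 4 ^ (n - j - k + 1),
        Nat.mod_lt _ hB0⟩ : Fin (4 ^ (n - j - k + 1))),
      (⟨(max (mm e.1.1.1 e.1.1.2) (mm e.1.2.1 e.1.2.2) -
          min (mm e.1.1.1 e.1.1.2) (mm e.1.2.1 e.1.2.2) - 1) % 4 ^ (n - j - k + 1),
        Nat.mod_lt _ hB0⟩ : Fin (4 ^ (n - j - k + 1)))))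
  intro e1 e2 heq
  obtain ⟨⟨⟨a1, b1⟩, c1, d1⟩, hm1⟩ := e1
  obtain ⟨⟨⟨a2, b2⟩, c2, d2⟩, hm2⟩ := e2
  simp only [Set.mem_setOf_eq] at hm1 hm2
  obtain ⟨h11, h12, h13, h14⟩ := hm1
  obtain ⟨h21, h22, h23, h24⟩ := hm2
  obtain ⟨ne1, hle1, hmod1⟩ := facts hjk a1 b1 c1 d1 h11 h12 h14
  obtain ⟨ne2, hle2, hmod2⟩ := facts hjk a2 b2 c2 d2 h21 h22 h24
  simp only [Prod.mk.injEq, Fin.mk.injEq, Subtype.mk.injEq] at heq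
  obtain ⟨hbool, hdiv, hmodq, hD⟩ := heq
  have hdivlt : ∀ (x y : Fin n → Bool) (x' y' : Fin n → Bool),
      max (mm x y) (mm x' y') / 4 ^ (n - k - 4) < 4 ^ (n - (n - k - 4)) := by
    intro x y x' y'
    rw [Nat.div_lt_iff_lt_mul (pow_pos (by norm_num) _)]
    calc max (mm x y) (mm x' y') < 4 ^ n := max_lt (mm_lt _ _) (mm_lt _ _)
      _ ≤ 4 ^ (n - (n - k - 4)) * 4 ^ (n - k - 4) := by
          rw [← pow_add]
          exact Nat.pow_le_pow_right (by norm_num) (by omega)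
  rw [Nat.mod_eq_of_lt (hdivlt a1 b1 c1 d1), Nat.mod_eq_of_lt (hdivlt a2 b2 c2 d2)] at hdiv
  rw [Nat.mod_eq_of_lt (hmod1.trans_le hle1), Nat.mod_eq_of_lt (hmod2.trans_le hle2)] at hmodq
  have hmin1 : min (mm a1 b1) (mm c1 d1) < max (mm a1 b1) (mm c1 d1) := min_lt_max.mpr ne1
  have hmin2 : min (mm a2 b2) (mm c2 d2) < max (mm a2 b2) (mm c2 d2) := min_lt_max.mpr ne2
  rw [Nat.mod_eq_of_lt (by omega), Nat.mod_eq_of_lt (by omega)] at hD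
  have hMeq : max (mm a1 b1) (mm c1 d1) = max (mm a2 b2) (mm c2 d2) := by
    have e1 := Nat.div_add_mod (max (mm a1 b1) (mm c1 d1)) (4 ^ (n - k - 4))
    have e2 := Nat.div_add_mod (max (mm a2 b2) (mm c2 d2)) (4 ^ (n - k - 4))
    rw [← e1, ← e2, hdiv, hmodq]
  have hbool' := decide_eq_decide.mp hbool
  have hxy : mm a1 b1 = mm a2 b2 ∧ mm c1 d1 = mm c2 d2 := by
    by_cases hlt : mm c1 d1 < mm a1 b1
    · have hlt2 := hbool'.mp hlt
      have hM1 : max (mm a1 b1) (mm c1 d1) = mm a1 b1 := max_eq_left hlt.le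
      have hm1' : min (mm a1 b1) (mm c1 d1) = mm c1 d1 := min_eq_right hlt.le
      have hM2 : max (mm a2 b2) (mm c2 d2) = mm a2 b2 := max_eq_left hlt2.le
      have hm2' : min (mm a2 b2) (mm c2 d2) = mm c2 d2 := min_eq_right hlt2.le
      omega
    · have h2' : ¬ (mm c2 d2 < mm a2 b2) := fun hcon => hlt (hbool'.mpr hcon)
      have hM1 : max (mm a1 b1) (mm c1 d1) = mm c1 d1 := max_eq_right (by omega)
      have hm1' : min (mm a1 b1) (mm c1 d1) = mm a1 b1 := min_eq_left (by omega)
      have hM2 : max (mm a2 b2) (mm c2 d2) = mm c2 d2 := max_eq_right (by omega)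
      have hm2' : min (mm a2 b2) (mm c2 d2) = mm a2 b2 := min_eq_left (by omega)
      omega
  obtain ⟨hx, hy⟩ := hxy
  obtain ⟨ha, hb⟩ := mm_inj _ _ _ _ hx
  obtain ⟨hc, hd⟩ := mm_inj _ _ _ _ hy
  subst ha; subst hb; subst hc; subst hd
  rfl

end FavAux

/-- There exists `C > 0` such that for all `n ≥ 1`, `j ≥ 0` and `0 ≤ k ≤ n − j`, the
number of ordered pairs `(z, z')` of centers of squares of `K_n` with
`4^{-k-j-1} ≤ |u(z) − u(z')| ≤ 4^{-k-j+1}` and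
`4^{-j-1}|v(z) − v(z')| ≤ |u(z) − u(z')| ≤ 4^{-j+1}|v(z) − v(z')|`
is at most `C · 4^{2n − k − 2j}`. -/


theorem card_jk_pairs_le : ∃ C : ℝ, 0 < C ∧ ∀ n j k : ℕ, 1 ≤ n → j + k ≤ n →
    (Nat.card {p : ((Fin n → Bool) × (Fin n → Bool)) × ((Fin n → Bool) × (Fin n → Bool)) |
        (4 : ℝ) ^ (-(k : ℤ) - j - 1) ≤
            |uCoord (sqCenter p.1.1 p.1.2) - uCoord (sqCenter p.2.1 p.2.2)| ∧
          |uCoord (sqCenter p.1.1 p.1.2) - uCoord (sqCenter p.2.1 p.2.2)| ≤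
            (4 : ℝ) ^ (-(k : ℤ) - j + 1) ∧
          (4 : ℝ) ^ (-(j : ℤ) - 1) *
              |vCoord (sqCenter p.1.1 p.1.2) - vCoord (sqCenter p.2.1 p.2.2)| ≤
            |uCoord (sqCenter p.1.1 p.1.2) - uCoord (sqCenter p.2.1 p.2.2)| ∧
          |uCoord (sqCenter p.1.1 p.1.2) - uCoord (sqCenter p.2.1 p.2.2)| ≤
            (4 : ℝ) ^ (-(j : ℤ) + 1) *
              |vCoord (sqCenter p.1.1 p.1.2) - vCoord (sqCenter p.2.1 p.2.2)|} : ℝ) ≤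
      C * (4 : ℝ) ^ (2 * (n : ℤ) - k - 2 * j) := by
  refine ⟨8192, by norm_num, ?_⟩
  intro n j k hn hjk
  have hcount := FavAux.count_main (n := n) (j := j) (k := k) hn hjk
  have hnat : 2 * (4 ^ (n - (n - k - 4)) * (4 ^ (n - j - k + 1) * 4 ^ (n - j - k + 1)))
      ≤ 8192 * 4 ^ (k + 2 * (n - j - k)) := by
    have h1 : (4:ℕ) ^ (n - (n - k - 4)) ≤ 4 ^ (k + 4) :=
      Nat.pow_le_pow_right (by norm_num) (by omega)
    calc 2 * (4 ^ (n - (n - k - 4)) * (4 ^ (n - j - k + 1) * 4 ^ (n - j - k + 1)))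
        ≤ 2 * (4 ^ (k + 4) * (4 ^ (n - j - k + 1) * 4 ^ (n - j - k + 1))) := by
          exact Nat.mul_le_mul_left 2 (Nat.mul_le_mul_right _ h1)
      _ = 8192 * 4 ^ (k + 2 * (n - j - k)) := by
          rw [← pow_add, ← pow_add,
            show (k + 4) + ((n - j - k + 1) + (n - j - k + 1)) = (k + 2 * (n - j - k)) + 6
              from by ring,
            pow_add]
          ring
  have hle := le_trans hcount hnat
  have hcast : ((8192 * 4 ^ (k + 2 * (n - j - k)) : ℕ) : ℝ)
      = 8192 * (4:ℝ) ^ (2 * (n : ℤ) - k - 2 * j) := by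
    have hexp : (2 * (n:ℤ) - k - 2 * j) = ((k + 2 * (n - j - k) : ℕ) : ℤ) := by omega
    rw [hexp, zpow_natCast]
    push_cast
    ring
  rw [← hcast]
  exact_mod_cast hle
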